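/- Let Φ₁ and Φ₂ be linear maps on d×d complex matrices such that ‖Φᵢ(X)‖₁ ≤ ‖X‖₁ for every matrix X (i = 1,2), each of which maps density matrices to density matrices, and suppose ρ₁ and ρ₂ are density matrices with Φ₁(ρ₁) = ρ₁ and Φ₂(ρ₂) = ρ₂. Fix ε > 0 and a natural number m such that ‖Φ₁^m(ρ) − ρ₁‖₁ ≤ ε/2 for every density matrix ρ, and such that m·‖Φ₁ − Φ₂‖_{1→1} ≤ ε/2. Then for every density matrix ρ one has ‖Φ₂^m(ρ) − ρ₂‖₁ ≤ 2ε. -/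

import Mathlib

open Matrix MeasureTheory Filter
open scoped ComplexOrder

noncomputable section

/-- The space of `d × d` complex matrices. -/
abbrev Mat (d : ℕ) : Type := Matrix (Fin d) (Fin d) ℂ

/-- The Gibbs state `ρ_β = exp(-βH)/Tr(exp(-βH))`. -/
def gibbs {d : ℕ} (H : Mat d) (β : ℝ) : Mat d :=
  (Matrix.trace (NormedSpace.exp ((-β : ℂ) • H)))⁻¹ • NormedSpace.exp ((-β : ℂ) • H)

/-- The power `ρ_β^s = exp(-sβH)/Tr(exp(-βH))^s`. -/
def gibbsPow {d : ℕ} (H : Mat d) (β s : ℝ) : Mat d :=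
  ((Matrix.trace (NormedSpace.exp ((-β : ℂ) • H))) ^ (s : ℂ))⁻¹ •
    NormedSpace.exp ((-(s * β) : ℂ) • H)

/-- The Hilbert–Schmidt inner product `⟨A,B⟩₂ = Tr(A† B)`. -/
def hsInner {d : ℕ} (A B : Mat d) : ℂ := Matrix.trace (Aᴴ * B)

/-- The KMS inner product `⟨A,B⟩_{ρ_β} = Tr(A† ρ_β^{1/2} B ρ_β^{1/2})`. -/
def kmsInner {d : ℕ} (H : Mat d) (β : ℝ) (A B : Mat d) : ℂ :=
  Matrix.trace (Aᴴ * gibbsPow H β (1/2) * B * gibbsPow H β (1/2))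

/-- The trace norm `‖A‖₁ = Tr √(A†A)`. -/
def traceNorm {d : ℕ} (A : Mat d) : ℝ :=
  (((Matrix.posSemidef_conjTranspose_mul_self A).1.eigenvectorUnitary.1 *
    diagonal (((↑) : ℝ → ℂ) ∘ Real.sqrt ∘ (Matrix.posSemidef_conjTranspose_mul_self A).1.eigenvalues) *
    (star (Matrix.posSemidef_conjTranspose_mul_self A).1.eigenvectorUnitary : Mat d)).trace).re

/-- The operator (spectral) norm of a matrix. -/
def opNorm {d : ℕ} (A : Mat d) : ℝ :=
  ‖Matrix.toEuclideanCLM (𝕜 := ℂ) A‖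

/-- The Frobenius / Hilbert–Schmidt norm `‖A‖₂ = √Tr(A†A)`. -/
def frobNorm {d : ℕ} (A : Mat d) : ℝ :=
  Real.sqrt ((Matrix.trace (Aᴴ * A)).re)

attribute [local instance] Matrix.frobeniusNormedAddCommGroup Matrix.frobeniusNormedSpace

/-- The exponential of a linear endomorphism of matrix space. -/
def endExp {d : ℕ} (L : Mat d →ₗ[ℂ] Mat d) : Mat d →ₗ[ℂ] Mat d :=
  (@NormedSpace.exp _ _ _
    (@NonUnitalSeminormedRing.toIsTopologicalRing _
      (@NormedRing.toSeminormedRing _ ContinuousLinearMap.toNormedRing).toNonUnitalSeminormedRing)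
    (LinearMap.toContinuousLinearMap L)).toLinearMap

/-- The induced trace norm (1→1 norm) of a linear map on matrices. -/
def oneNorm {d : ℕ} (L : Mat d →ₗ[ℂ] Mat d) : ℝ :=
  ⨆ A : {A : Mat d // traceNorm A = 1}, traceNorm (L A.1)

/-! Write `‖A‖₁ = Re Tr |A|`. For the triangle inequality take the polar decomposition
`A + B = W |A + B|` with `W` a contraction, so `‖A + B‖₁ = Re Tr (W† A) + Re Tr (W† B)`; and
`|Tr (C A)| ≤ ‖A‖₁` for every contraction `C`, by Hilbert–Schmidt Cauchy–Schwarz after splitting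
`|A| = √|A| √|A|`.

Along density matrices, one step of `Φ₂` differs from one step of the contraction `Φ₁` by at most
`‖Φ₁ - Φ₂‖_{1→1}`, so telescoping gives `‖Φ₁^m ρ - Φ₂^m ρ‖₁ ≤ ε/2`. Applied to `ρ` and to the
fixed point `ρ₂`, together with the mixing of `Φ₁` at `ρ` and at `ρ₂`, this bounds
`‖Φ₂^m ρ - ρ₂‖₁` by four terms of size `ε/2`. -/

namespace Matrix

open scoped MatrixOrder

variable {n : Type*} [Fintype n] [DecidableEq n] {𝕜 : Type*} [RCLike 𝕜]

theorem norm_trace_mul_conjTranspose_le (X Y : Matrix n n 𝕜) :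
    ‖(X * Yᴴ).trace‖ ≤ √(RCLike.re (X * Xᴴ).trace) * √(RCLike.re (Y * Yᴴ).trace) := by
  let _ := toMatrixSeminormedAddCommGroup (1 : Matrix n n 𝕜) PosSemidef.one
  let _ := toMatrixInnerProductSpace (1 : Matrix n n 𝕜) PosSemidef.one
  have hinner (U V : Matrix n n 𝕜) : inner 𝕜 U V = (V * Uᴴ).trace := by
    change (V * 1 * Uᴴ).trace = _
    rw [Matrix.mul_one]
  have h := norm_inner_le_norm (𝕜 := 𝕜) Y X
  rwa [norm_eq_sqrt_re_inner (𝕜 := 𝕜) X, norm_eq_sqrt_re_inner (𝕜 := 𝕜) Y, mul_comm, hinner,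
    hinner, hinner] at h

/-- Polar decomposition with `W = A |A|⁺`: since `0⁻¹ = 0`, `cfc (·⁻¹) |A|` is the Moore–Penrose
inverse `|A|⁺`. -/
theorem exists_mul_cfcAbs_eq (A : Matrix n n 𝕜) :
    ∃ W : Matrix n n 𝕜, W * CFC.abs A = A ∧ Wᴴ * A = CFC.abs A ∧ Wᴴ * W ≤ 1 := by
  set P := CFC.abs A
  have hP : IsSelfAdjoint P := (CFC.abs_nonneg A).isSelfAdjoint
  have hcont (f : ℝ → ℝ) : ContinuousOn f (spectrum ℝ P) :=
    (spectrum ℝ P).toFinite.continuousOn f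
  have hmul (f g : ℝ → ℝ) : cfc f P * cfc g P = cfc (fun x => f x * g x) P :=
    (cfc_mul f g P (hcont f) (hcont g)).symm
  have hself (f : ℝ → ℝ) : (cfc f P)ᴴ = cfc f P := (cfc_predicate f P).star_eq
  have hAA : Aᴴ * A = cfc (fun x : ℝ => x * x) P := by
    rw [← hmul, cfc_id' ℝ P]; exact (CFC.abs_mul_abs A).symm
  have hker : A * cfc (fun x : ℝ => 1 - x⁻¹ * x) P = 0 := by
    rw [← conjTranspose_mul_self_eq_zero, conjTranspose_mul, hself, mul_assoc, ← mul_assoc Aᴴ,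
      hAA, hmul, hmul, ← cfc_zero ℝ P]
    refine cfc_congr fun x _ => ?_
    rcases eq_or_ne x 0 with rfl | hx <;> simp [*]
  have hsplit : cfc (fun x : ℝ => x⁻¹ * x) P + cfc (fun x : ℝ => 1 - x⁻¹ * x) P = 1 := by
    rw [← cfc_add _ _ _ (hcont _) (hcont _), ← cfc_const_one ℝ P]
    exact cfc_congr fun x _ => by ring
  refine ⟨A * cfc (fun x : ℝ => x⁻¹) P, ?_, ?_, ?_⟩
  · have hinv := hmul (·⁻¹) (fun x => x)
    rw [cfc_id' ℝ P] at hinv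
    rw [mul_assoc, hinv, eq_sub_of_add_eq hsplit, mul_sub, hker, mul_one, sub_zero]
  · rw [conjTranspose_mul, hself, mul_assoc, hAA, hmul]
    nth_rw 2 [← cfc_id' ℝ P]
    refine cfc_congr fun x _ => ?_
    rcases eq_or_ne x 0 with rfl | hx
    · simp
    · field_simp
  · rw [conjTranspose_mul, hself, mul_assoc, ← mul_assoc Aᴴ, hAA, hmul, hmul]
    refine cfc_le_one _ P fun x _ => ?_
    rcases eq_or_ne x 0 with rfl | hx
    · simp
    · field_simp; rfl

theorem norm_trace_mul_le_re_trace_cfcAbs {C : Matrix n n 𝕜} (hC : C * Cᴴ ≤ 1)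
    (A : Matrix n n 𝕜) : ‖(C * A).trace‖ ≤ RCLike.re (CFC.abs A).trace := by
  obtain ⟨V, hVP, hVA, -⟩ := exists_mul_cfcAbs_eq A
  set P := CFC.abs A
  set R := CFC.sqrt P
  have hRR : R * R = P := CFC.sqrt_mul_sqrt_self P (CFC.abs_nonneg A)
  have hR : Rᴴ = R := (CFC.sqrt_nonneg P).isSelfAdjoint.star_eq
  have hP : 0 ≤ RCLike.re P.trace :=
    (RCLike.nonneg_iff.mp (CFC.abs_nonneg A).posSemidef.trace_nonneg).1
  have hCA : (C * A).trace = (V * R * (Cᴴ * R)ᴴ).trace := by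
    rw [conjTranspose_mul, hR, conjTranspose_conjTranspose, ← hVP, ← hRR, trace_mul_comm]
    simp only [mul_assoc]
  have hVR : RCLike.re (V * R * (V * R)ᴴ).trace = RCLike.re P.trace := by
    rw [conjTranspose_mul, hR, ← mul_assoc, mul_assoc V, hRR, hVP, trace_mul_comm, hVA]
  have hCR : RCLike.re (Cᴴ * R * (Cᴴ * R)ᴴ).trace ≤ RCLike.re P.trace := by
    have h := (CFC.sqrt_nonneg P).isSelfAdjoint.conjugate_le_conjugate hC
    rw [mul_one, hRR, ← sub_nonneg] at h
    have h' := (RCLike.nonneg_iff.mp h.posSemidef.trace_nonneg).1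
    rw [trace_sub, map_sub, sub_nonneg] at h'
    have hcyc : (Cᴴ * R * (Cᴴ * R)ᴴ).trace = (R * (C * Cᴴ) * R).trace := by
      rw [conjTranspose_mul, hR, conjTranspose_conjTranspose, trace_mul_comm]
      simp only [mul_assoc]
    rwa [hcyc]
  calc ‖(C * A).trace‖
      ≤ √(RCLike.re (V * R * (V * R)ᴴ).trace) * √(RCLike.re (Cᴴ * R * (Cᴴ * R)ᴴ).trace) := by
        rw [hCA]; exact norm_trace_mul_conjTranspose_le _ _
    _ ≤ √(RCLike.re P.trace) * √(RCLike.re P.trace) := by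
        rw [hVR]; gcongr
    _ = RCLike.re P.trace := Real.mul_self_sqrt hP

theorem re_trace_cfcAbs_add_le (A B : Matrix n n 𝕜) :
    RCLike.re (CFC.abs (A + B)).trace ≤
      RCLike.re (CFC.abs A).trace + RCLike.re (CFC.abs B).trace := by
  obtain ⟨W, -, hWA, hWW⟩ := exists_mul_cfcAbs_eq (A + B)
  have hC : Wᴴ * Wᴴᴴ ≤ 1 := by rwa [conjTranspose_conjTranspose]
  calc RCLike.re (CFC.abs (A + B)).trace
      = RCLike.re (Wᴴ * A).trace + RCLike.re (Wᴴ * B).trace := by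
        rw [← hWA, mul_add, trace_add, map_add]
    _ ≤ ‖(Wᴴ * A).trace‖ + ‖(Wᴴ * B).trace‖ :=
        add_le_add (RCLike.re_le_norm _) (RCLike.re_le_norm _)
    _ ≤ _ := add_le_add (norm_trace_mul_le_re_trace_cfcAbs hC A)
        (norm_trace_mul_le_re_trace_cfcAbs hC B)

end Matrix

section TraceNorm

open scoped MatrixOrder

variable {d : ℕ}

theorem traceNorm_eq_re_trace_cfcAbs (A : Mat d) : traceNorm A = (CFC.abs A).trace.re := by
  have hM := posSemidef_conjTranspose_mul_self A
  rw [CFC.abs, star_eq_conjTranspose, CFC.sqrt_eq_cfc, cfc_nnreal_eq_real _ (Aᴴ * A), hM.1.cfc_eq]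
  simp only [IsHermitian.cfc, traceNorm, Real.coe_sqrt, Real.coe_toNNReal',
    Unitary.conjStarAlgAut_apply]
  have hsqrt : (fun x : ℝ => √(max x 0)) ∘ hM.1.eigenvalues = Real.sqrt ∘ hM.1.eigenvalues := by
    funext i
    simp [hM.eigenvalues_nonneg i]
  rw [hsqrt]; rfl

theorem traceNorm_add_le (A B : Mat d) : traceNorm (A + B) ≤ traceNorm A + traceNorm B := by
  simpa only [traceNorm_eq_re_trace_cfcAbs, RCLike.re_to_complex] using re_trace_cfcAbs_add_le A B

theorem traceNorm_neg (A : Mat d) : traceNorm (-A) = traceNorm A := by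
  rw [traceNorm_eq_re_trace_cfcAbs, traceNorm_eq_re_trace_cfcAbs, CFC.abs_neg]

theorem traceNorm_sub_comm (A B : Mat d) : traceNorm (A - B) = traceNorm (B - A) := by
  rw [← neg_sub, traceNorm_neg]

theorem traceNorm_sub_le (A B C : Mat d) :
    traceNorm (A - C) ≤ traceNorm (A - B) + traceNorm (B - C) := by
  simpa only [sub_add_sub_cancel] using traceNorm_add_le (A - B) (B - C)

theorem Matrix.PosSemidef.traceNorm_eq {ρ : Mat d} (hρ : ρ.PosSemidef) :
    traceNorm ρ = ρ.trace.re := by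
  rw [traceNorm_eq_re_trace_cfcAbs, CFC.abs_of_nonneg ρ hρ.nonneg]

theorem traceNorm_zero : traceNorm (0 : Mat d) = 0 := by
  simp [PosSemidef.zero.traceNorm_eq]

end TraceNorm

def densityMatrices (d : ℕ) : Set (Mat d) := {ρ | ρ.PosSemidef ∧ ρ.trace = 1}

theorem traceNorm_eq_one_of_mem_densityMatrices {d : ℕ} {ρ : Mat d}
    (hρ : ρ ∈ densityMatrices d) : traceNorm ρ = 1 := by
  rw [hρ.1.traceNorm_eq, hρ.2, Complex.one_re]

section Channels

variable {d : ℕ} {Φ₁ Φ₂ : Mat d →ₗ[ℂ] Mat d}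

theorem traceNorm_apply_le_oneNorm {L : Mat d →ₗ[ℂ] Mat d} {C : ℝ}
    (hL : ∀ X, traceNorm (L X) ≤ C * traceNorm X) {X : Mat d} (hX : traceNorm X = 1) :
    traceNorm (L X) ≤ oneNorm L :=
  le_ciSup (f := fun A : {A : Mat d // traceNorm A = 1} => traceNorm (L A.1))
    ⟨C, by rintro _ ⟨A, rfl⟩; simpa [A.2] using hL A⟩ ⟨X, hX⟩

theorem traceNorm_sub_apply_le (hΦ₁ : ∀ X, traceNorm (Φ₁ X) ≤ traceNorm X)
    (hΦ₂ : ∀ X, traceNorm (Φ₂ X) ≤ traceNorm X) (X : Mat d) :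
    traceNorm ((Φ₁ - Φ₂) X) ≤ 2 * traceNorm X := by
  have h := traceNorm_add_le (Φ₁ X) (-Φ₂ X)
  rw [traceNorm_neg, ← sub_eq_add_neg] at h
  rw [LinearMap.sub_apply]
  linarith [hΦ₁ X, hΦ₂ X]

theorem traceNorm_iterate_sub_iterate_le {S : Set (Mat d)} {δ : ℝ}
    (hΦ₁ : ∀ X, traceNorm (Φ₁ X) ≤ traceNorm X) (hS : Set.MapsTo Φ₂ S S)
    (hδ : ∀ X ∈ S, traceNorm ((Φ₁ - Φ₂) X) ≤ δ) (k : ℕ) {X : Mat d} (hX : X ∈ S) :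
    traceNorm ((⇑Φ₁)^[k] X - (⇑Φ₂)^[k] X) ≤ k * δ := by
  induction k with
  | zero => simp [traceNorm_zero]
  | succ k ih =>
    have hstep : (⇑Φ₁)^[k + 1] X - (⇑Φ₂)^[k + 1] X =
        Φ₁ ((⇑Φ₁)^[k] X - (⇑Φ₂)^[k] X) + (Φ₁ - Φ₂) ((⇑Φ₂)^[k] X) := by
      rw [Function.iterate_succ_apply', Function.iterate_succ_apply', map_sub,
        LinearMap.sub_apply]
      abel
    calc traceNorm ((⇑Φ₁)^[k + 1] X - (⇑Φ₂)^[k + 1] X)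
        ≤ traceNorm (Φ₁ ((⇑Φ₁)^[k] X - (⇑Φ₂)^[k] X)) + traceNorm ((Φ₁ - Φ₂) ((⇑Φ₂)^[k] X)) := by
          rw [hstep]; exact traceNorm_add_le _ _
      _ ≤ k * δ + δ := add_le_add ((hΦ₁ _).trans ih) (hδ _ (hS.iterate k hX))
      _ = (k + 1 : ℕ) * δ := by push_cast; ring

end Channels

theorem stmt_11_general {d : ℕ} (Φ₁ Φ₂ : Mat d →ₗ[ℂ] Mat d)
    (hc1 : ∀ X : Mat d, traceNorm (Φ₁ X) ≤ traceNorm X)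
    (hc2 : ∀ X : Mat d, traceNorm (Φ₂ X) ≤ traceNorm X)
    (hd2 : ∀ ρ : Mat d, ρ.PosSemidef → Matrix.trace ρ = 1 →
      (Φ₂ ρ).PosSemidef ∧ Matrix.trace (Φ₂ ρ) = 1)
    (ρ₁ ρ₂ : Mat d)
    (hρ₂ : ρ₂.PosSemidef) (hρ₂tr : Matrix.trace ρ₂ = 1) (hfix₂ : Φ₂ ρ₂ = ρ₂)
    (ε : ℝ) (m : ℕ)
    (hmix : ∀ ρ : Mat d, ρ.PosSemidef → Matrix.trace ρ = 1 →
      traceNorm ((⇑Φ₁)^[m] ρ - ρ₁) ≤ ε / 2)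
    (hclose : (m : ℝ) * oneNorm (Φ₁ - Φ₂) ≤ ε / 2) :
    ∀ ρ : Mat d, ρ.PosSemidef → Matrix.trace ρ = 1 →
      traceNorm ((⇑Φ₂)^[m] ρ - ρ₂) ≤ 2 * ε := by
  intro ρ hρ hρtr
  have hD : Set.MapsTo Φ₂ (densityMatrices d) (densityMatrices d) := fun X hX => hd2 X hX.1 hX.2
  have hdrift : ∀ X ∈ densityMatrices d, traceNorm ((⇑Φ₁)^[m] X - (⇑Φ₂)^[m] X) ≤ ε / 2 :=
    fun X hX => (traceNorm_iterate_sub_iterate_le hc1 hD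
      (fun Y hY => traceNorm_apply_le_oneNorm (traceNorm_sub_apply_le hc1 hc2)
        (traceNorm_eq_one_of_mem_densityMatrices hY)) m hX).trans hclose
  have hρ₂drift := hdrift ρ₂ ⟨hρ₂, hρ₂tr⟩
  rw [Function.iterate_fixed hfix₂] at hρ₂drift
  calc traceNorm ((⇑Φ₂)^[m] ρ - ρ₂)
      ≤ traceNorm ((⇑Φ₂)^[m] ρ - (⇑Φ₁)^[m] ρ) + traceNorm ((⇑Φ₁)^[m] ρ - ρ₁)
        + traceNorm (ρ₁ - (⇑Φ₁)^[m] ρ₂) + traceNorm ((⇑Φ₁)^[m] ρ₂ - ρ₂) := by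
        linarith [traceNorm_sub_le ((⇑Φ₂)^[m] ρ) ((⇑Φ₁)^[m] ρ) ρ₂,
          traceNorm_sub_le ((⇑Φ₁)^[m] ρ) ρ₁ ρ₂, traceNorm_sub_le ρ₁ ((⇑Φ₁)^[m] ρ₂) ρ₂]
    _ ≤ 2 * ε := by
        rw [traceNorm_sub_comm _ ((⇑Φ₁)^[m] ρ), traceNorm_sub_comm ρ₁]
        linarith [hdrift ρ ⟨hρ, hρtr⟩, hmix ρ hρ hρtr, hmix ρ₂ hρ₂ hρ₂tr]

/-- stability of mixing under perturbation of the channel. -/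
theorem stmt_11 {d : ℕ} (Φ₁ Φ₂ : Mat d →ₗ[ℂ] Mat d)
    (hc1 : ∀ X : Mat d, traceNorm (Φ₁ X) ≤ traceNorm X)
    (hc2 : ∀ X : Mat d, traceNorm (Φ₂ X) ≤ traceNorm X)
    (hd1 : ∀ ρ : Mat d, ρ.PosSemidef → Matrix.trace ρ = 1 →
      (Φ₁ ρ).PosSemidef ∧ Matrix.trace (Φ₁ ρ) = 1)
    (hd2 : ∀ ρ : Mat d, ρ.PosSemidef → Matrix.trace ρ = 1 →
      (Φ₂ ρ).PosSemidef ∧ Matrix.trace (Φ₂ ρ) = 1)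
    (ρ₁ ρ₂ : Mat d)
    (hρ₁ : ρ₁.PosSemidef) (hρ₁tr : Matrix.trace ρ₁ = 1) (hfix₁ : Φ₁ ρ₁ = ρ₁)
    (hρ₂ : ρ₂.PosSemidef) (hρ₂tr : Matrix.trace ρ₂ = 1) (hfix₂ : Φ₂ ρ₂ = ρ₂)
    (ε : ℝ) (hε : 0 < ε) (m : ℕ)
    (hmix : ∀ ρ : Mat d, ρ.PosSemidef → Matrix.trace ρ = 1 →
      traceNorm ((⇑Φ₁)^[m] ρ - ρ₁) ≤ ε / 2)
    (hclose : (m : ℝ) * oneNorm (Φ₁ - Φ₂) ≤ ε / 2) :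
    ∀ ρ : Mat d, ρ.PosSemidef → Matrix.trace ρ = 1 →
      traceNorm ((⇑Φ₂)^[m] ρ - ρ₂) ≤ 2 * ε :=
  stmt_11_general Φ₁ Φ₂ hc1 hc2 hd2 ρ₁ ρ₂ hρ₂ hρ₂tr hfix₂ ε m hmix hclose

end
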